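/- arXiv:2408.12914 — 5 statements merged into one kernel-verified Lean document; each statement's English description precedes it below -/
import Mathlib

section
/- Let γ > 0 and b > 0 satisfy 1 − ρ(γ)·b > 0, and let T be the EAR recursion map built from γ and b. Then the limit as x tends to γ (with x ≠ γ, x > 0) of (T(x) − γ)/(x − γ) equals 0; that is, the EAR recursion has superlinear convergence rate at its fixed point γ. -/
/-!
Write `s(x) = √(x² + 2x)`, so that `(1 + x)² - s(x)² = 1`. Then `μ(x) = s(x)/(1+x) - log(1+x)·ρ(x)`
and `(s/(1+x))' = ρ/(1+x)`, which cancels against the derivative of `log(1+x)`, leaving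
`μ' = -log(1+x)·ρ'`. Hence the numerator `c + μ b` and the denominator `1 - ρ b` of the exponent of
`T` have value and derivative in the same ratio `log(1+γ)` at `γ`. So the exponent has value
`log(1+γ)` and derivative `0` at `γ`: `γ` is a fixed point of `T` with `T'(γ) = 0`, and the
difference quotient at a fixed point tends to the derivative.
-/

open Filter Topology

/-- ρ(γ) = 1/((1+γ)·√(γ²+2γ)) -/
noncomputable def rho (γ : ℝ) : ℝ := 1 / ((1 + γ) * Real.sqrt (γ ^ 2 + 2 * γ))

/-- μ(γ) = √(γ²+2γ)/(1+γ) − ln(1+γ)/((1+γ)·√(γ²+2γ)) -/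
noncomputable def mu (γ : ℝ) : ℝ :=
  Real.sqrt (γ ^ 2 + 2 * γ) / (1 + γ) -
    Real.log (1 + γ) / ((1 + γ) * Real.sqrt (γ ^ 2 + 2 * γ))

/-- The EAR recursion map built from γ and b, where
c = ln(1+γ) − b·√(γ²+2γ)/(1+γ). -/
noncomputable def EAR (γ b x : ℝ) : ℝ :=
  Real.exp (((Real.log (1 + γ) - b * Real.sqrt (γ ^ 2 + 2 * γ) / (1 + γ)) + mu x * b) /
    (1 - rho x * b)) - 1

open Real

theorem HasDerivAt.div_of_eq_mul {f g : ℝ → ℝ} {f' g' x L : ℝ} (hf : HasDerivAt f f' x)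
    (hg : HasDerivAt g g' x) (hgx : g x ≠ 0) (hfx : f x = L * g x) (hf' : f' = L * g') :
    HasDerivAt (fun y => f y / g y) 0 x := by
  refine (hf.div hg hgx).congr_deriv ?_
  rw [hfx, hf']
  field_simp
  ring

theorem HasDerivAt.tendsto_sub_div_sub_of_apply_eq {f : ℝ → ℝ} {f' a : ℝ}
    (hf : HasDerivAt f f' a) (hfa : f a = a) :
    Tendsto (fun x => (f x - a) / (x - a)) (𝓝[≠] a) (𝓝 f') := by
  simpa only [slope_fun_def_field, hfa] using hasDerivAt_iff_tendsto_slope.mp hf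

theorem hasDerivAt_sqrt_sq_add_two_mul {x : ℝ} (hx : 0 < x) :
    HasDerivAt (fun y => √(y ^ 2 + 2 * y)) ((1 + x) / √(x ^ 2 + 2 * x)) x := by
  have hpoly : HasDerivAt (fun y : ℝ => y ^ 2 + 2 * y) (2 * (1 + x)) x := by
    refine ((hasDerivAt_pow 2 x).add ((hasDerivAt_id x).const_mul 2)).congr_deriv ?_
    ring
  refine (hpoly.sqrt (by positivity)).congr_deriv ?_
  field_simp

theorem hasDerivAt_sqrt_sq_add_two_mul_div_one_add {x : ℝ} (hx : 0 < x) :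
    HasDerivAt (fun y => √(y ^ 2 + 2 * y) / (1 + y)) (rho x / (1 + x)) x := by
  have hs : 0 < √(x ^ 2 + 2 * x) := sqrt_pos.mpr (by positivity)
  have hsq : √(x ^ 2 + 2 * x) ^ 2 = x ^ 2 + 2 * x := sq_sqrt (by positivity)
  refine ((hasDerivAt_sqrt_sq_add_two_mul hx).div ((hasDerivAt_id' x).const_add 1)
    (by positivity)).congr_deriv ?_
  unfold rho
  generalize √(x ^ 2 + 2 * x) = s at hs hsq ⊢
  field_simp
  linear_combination -hsq

theorem differentiableAt_rho {x : ℝ} (hx : 0 < x) : DifferentiableAt ℝ rho x := by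
  have hs : 0 < √(x ^ 2 + 2 * x) := sqrt_pos.mpr (by positivity)
  exact (differentiableAt_const 1).div
    ((differentiableAt_id.const_add 1).mul (hasDerivAt_sqrt_sq_add_two_mul hx).differentiableAt)
    (by positivity)

theorem mu_eq (x : ℝ) : mu x = √(x ^ 2 + 2 * x) / (1 + x) - log (1 + x) * rho x := by
  rw [mu, rho, mul_one_div]

theorem hasDerivAt_mu {x : ℝ} (hx : 0 < x) :
    HasDerivAt mu (-(log (1 + x) * deriv rho x)) x := by
  have hlog : HasDerivAt (fun y => log (1 + y)) (1 / (1 + x)) x := by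
    simpa [one_div] using ((hasDerivAt_id x).const_add 1).log (by positivity)
  rw [show mu = _ from funext mu_eq]
  refine ((hasDerivAt_sqrt_sq_add_two_mul_div_one_add hx).sub
    (hlog.mul (differentiableAt_rho hx).hasDerivAt)).congr_deriv ?_
  field_simp
  ring

theorem EAR_numerator_eq (γ b : ℝ) :
    log (1 + γ) - b * √(γ ^ 2 + 2 * γ) / (1 + γ) + mu γ * b = log (1 + γ) * (1 - rho γ * b) := by
  rw [mu_eq]
  ring

theorem EAR_self {γ b : ℝ} (hγ : 0 < γ) (hpos : 1 - rho γ * b ≠ 0) : EAR γ b γ = γ := by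
  rw [EAR, EAR_numerator_eq, mul_div_cancel_right₀ _ hpos, exp_log (by positivity)]
  ring

theorem hasDerivAt_EAR_self {γ b : ℝ} (hγ : 0 < γ) (hpos : 1 - rho γ * b ≠ 0) :
    HasDerivAt (EAR γ b) 0 γ := by
  have hnum := ((hasDerivAt_mu hγ).mul_const b).const_add
    (log (1 + γ) - b * √(γ ^ 2 + 2 * γ) / (1 + γ))
  have hden := ((differentiableAt_rho hγ).hasDerivAt.mul_const b).const_sub 1
  have hexponent := hnum.div_of_eq_mul hden hpos (EAR_numerator_eq γ b) (by ring)
  exact (hexponent.exp.sub_const 1).congr_deriv (mul_zero _)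

theorem stmt_1_general (γ b : ℝ) (hγ : 0 < γ) (hpos : 0 < 1 - rho γ * b) :
    Tendsto (fun x => (EAR γ b x - γ) / (x - γ))
      (𝓝[{x : ℝ | x ≠ γ ∧ 0 < x}] γ) (𝓝 0) :=
  ((hasDerivAt_EAR_self hγ hpos.ne').tendsto_sub_div_sub_of_apply_eq
    (EAR_self hγ hpos.ne')).mono_left (nhdsWithin_mono γ fun _ hx => hx.1)

/-- Superlinear convergence of the EAR recursion at its fixed point γ:
(T(x) − γ)/(x − γ) → 0 as x → γ with x ≠ γ, x > 0. -/
theorem stmt_1 (γ b : ℝ) (hγ : 0 < γ) (hb : 0 < b) (hpos : 0 < 1 - rho γ * b) :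
    Tendsto (fun x => (EAR γ b x - γ) / (x - γ))
      (𝓝[{x : ℝ | x ≠ γ ∧ 0 < x}] γ) (𝓝 0) :=
  stmt_1_general γ b hγ hpos
end

section
/- Let γ > 0 and b > 0 satisfy 1 − ρ(γ)·b > 0, and let T be the EAR recursion map built from γ and b. Then the limit as x tends to γ (with x ≠ γ, x > 0) of (T(x) − γ)/(x − γ)² equals (2γ² + 4γ + 1)·b / (2·(1+γ)²·(γ²+2γ)·√(γ²+2γ)·(1 − b/((1+γ)·√(γ²+2γ)))); that is, the EAR recursion has quadratic convergence rate at its fixed point γ with quadratic convergence factor g1(γ,b). -/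
open Filter Topology

/-- The quadratic convergence factor g₁(γ,b). -/
noncomputable def g1 (γ b : ℝ) : ℝ :=
  (2 * γ ^ 2 + 4 * γ + 1) * b /
    (2 * (1 + γ) ^ 2 * (γ ^ 2 + 2 * γ) * Real.sqrt (γ ^ 2 + 2 * γ) *
      (1 - b / ((1 + γ) * Real.sqrt (γ ^ 2 + 2 * γ))))

/-!
Write `s(x) = √(x² + 2x)`. Clearing the denominator `1 - ρ(x) b = ((1 + x) s(x) - b) / ((1 + x) s(x))`
shows that the exponent of `T(x)` is `ln(1 + γ) + b G(x) / ((1 + x) s(x) - b)`, where the defect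
`G(x) = x² + 2x - (s(γ)/(1 + γ)) (1 + x) s(x) - ln((1 + x)/(1 + γ))`, so that
`T(x) - γ = (1 + γ) (exp(b G(x) / ((1 + x) s(x) - b)) - 1)`. Since `G(γ) = G'(γ) = 0`,
`exp u - 1 ~ u` and `G(x)/(x - γ)² → G''(γ)/2` by L'Hôpital, with
`G''(γ) = (2γ² + 4γ + 1)/((1 + γ)² (γ² + 2γ))`.
-/

open Real

theorem tendsto_div_sub_sq_of_hasDerivAt {f f' : ℝ → ℝ} {a L : ℝ}
    (hf : ∀ᶠ x in 𝓝 a, HasDerivAt f (f' x) x) (hfa : f a = 0) (hf'a : f' a = 0)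
    (hf' : HasDerivAt f' L a) :
    Tendsto (fun x => f x / (x - a) ^ 2) (𝓝[≠] a) (𝓝 (L / 2)) := by
  refine HasDerivAt.lhopital_zero_nhdsNE (f' := f') (g' := fun x => 2 * (x - a))
    (hf.filter_mono nhdsWithin_le_nhds) ?_ ?_ ?_ ?_ ?_
  · refine .of_forall fun x => ?_
    have : HasDerivAt (fun y => (y - a) ^ 2) (2 * (x - a) ^ 1 * 1) x :=
      ((hasDerivAt_id x).sub_const a).pow 2
    simpa using this
  · filter_upwards [self_mem_nhdsWithin] with x hx
    exact mul_ne_zero two_ne_zero (sub_ne_zero.2 hx)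
  · simpa [hfa] using hf.self_of_nhds.continuousAt.tendsto.mono_left nhdsWithin_le_nhds
  · have : Continuous fun x : ℝ => (x - a) ^ 2 := by fun_prop
    simpa using this.continuousAt.tendsto.mono_left (nhdsWithin_le_nhds (a := a) (s := {a}ᶜ))
  · refine ((hasDerivAt_iff_tendsto_slope.1 hf').div_const 2).congr' ?_
    filter_upwards [self_mem_nhdsWithin] with x hx
    rw [slope_def_field, hf'a, sub_zero, div_div, mul_comm]

theorem hasDerivAt_sq_add_two_mul (x : ℝ) :
    HasDerivAt (fun y => y ^ 2 + 2 * y) (2 * (1 + x)) x :=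
  ((hasDerivAt_pow 2 x).add ((hasDerivAt_id x).const_mul 2)).congr_deriv (by ring)

namespace EAR

noncomputable def defect (γ x : ℝ) : ℝ :=
  x ^ 2 + 2 * x - √(γ ^ 2 + 2 * γ) / (1 + γ) * ((1 + x) * √(x ^ 2 + 2 * x)) -
    (log (1 + x) - log (1 + γ))

noncomputable def defectDeriv (γ x : ℝ) : ℝ :=
  2 * (1 + x) - √(γ ^ 2 + 2 * γ) / (1 + γ) * ((2 * (1 + x) ^ 2 - 1) / √(x ^ 2 + 2 * x)) -
    1 / (1 + x)

section

variable {γ : ℝ}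

theorem hasDerivAt_defect {x : ℝ} (hx : 0 < x) : HasDerivAt (defect γ) (defectDeriv γ x) x := by
  have hs : √(x ^ 2 + 2 * x) ^ 2 = x ^ 2 + 2 * x := sq_sqrt (by positivity)
  have hlog : HasDerivAt (fun y => log (1 + y)) (1 / (1 + x)) x := by
    simpa using ((hasDerivAt_id x).const_add 1).log (by positivity)
  refine (((hasDerivAt_sq_add_two_mul x).sub
    ((((hasDerivAt_id x).const_add 1).mul (hasDerivAt_sqrt_sq_add_two_mul hx)).const_mul
      (√(γ ^ 2 + 2 * γ) / (1 + γ)))).sub (hlog.sub_const (log (1 + γ)))).congr_deriv ?_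
  have : √(x ^ 2 + 2 * x) ≠ 0 := by positivity
  simp only [defectDeriv, id]
  set s := √(γ ^ 2 + 2 * γ)
  set t := √(x ^ 2 + 2 * x)
  field_simp
  linear_combination (-(1 + x) * s / (1 + γ)) * hs

theorem defect_self (hγ : 0 < γ) : defect γ γ = 0 := by
  have hs : √(γ ^ 2 + 2 * γ) ^ 2 = γ ^ 2 + 2 * γ := sq_sqrt (by positivity)
  have : 1 + γ ≠ 0 := by positivity
  simp only [defect]
  set s := √(γ ^ 2 + 2 * γ)
  field_simp
  linear_combination -hs

theorem defectDeriv_self (hγ : 0 < γ) : defectDeriv γ γ = 0 := by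
  have : √(γ ^ 2 + 2 * γ) ≠ 0 := by positivity
  have : 1 + γ ≠ 0 := by positivity
  simp only [defectDeriv]
  set s := √(γ ^ 2 + 2 * γ)
  field_simp
  ring

theorem hasDerivAt_defectDeriv_self (hγ : 0 < γ) :
    HasDerivAt (defectDeriv γ) ((2 * γ ^ 2 + 4 * γ + 1) / ((1 + γ) ^ 2 * (γ ^ 2 + 2 * γ))) γ := by
  have hs : √(γ ^ 2 + 2 * γ) ^ 2 = γ ^ 2 + 2 * γ := sq_sqrt (by positivity)
  have : √(γ ^ 2 + 2 * γ) ≠ 0 := by positivity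
  have hlin : HasDerivAt (fun y => 2 * (1 + y)) 2 γ := by
    simpa using ((hasDerivAt_id γ).const_add 1).const_mul 2
  have hnum : HasDerivAt (fun y => 2 * (1 + y) ^ 2 - 1) (2 * (2 * (1 + γ) ^ 1 * 1)) γ :=
    ((((hasDerivAt_id γ).const_add 1).pow 2).const_mul 2).sub_const 1
  have hinv : HasDerivAt (fun y => 1 / (1 + y)) (-1 / (1 + γ) ^ 2) γ := by
    simp only [one_div]
    exact (((hasDerivAt_id γ).const_add 1).inv (by positivity)).congr_deriv (by simp)
  refine ((hlin.sub ((hnum.div (hasDerivAt_sqrt_sq_add_two_mul hγ) this).const_mul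
    (√(γ ^ 2 + 2 * γ) / (1 + γ)))).sub hinv).congr_deriv ?_
  set s := √(γ ^ 2 + 2 * γ)
  field_simp
  linear_combination (-(2 * (1 + γ) ^ 2 + 1) * (γ ^ 2 + 2 * γ) - 1) * hs

theorem tendsto_defect_div_sq (hγ : 0 < γ) :
    Tendsto (fun x => defect γ x / (x - γ) ^ 2) (𝓝[≠] γ)
      (𝓝 ((2 * γ ^ 2 + 4 * γ + 1) / ((1 + γ) ^ 2 * (γ ^ 2 + 2 * γ)) / 2)) :=
  tendsto_div_sub_sq_of_hasDerivAt ((eventually_gt_nhds hγ).mono fun _ => hasDerivAt_defect)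
    (defect_self hγ) (defectDeriv_self hγ) (hasDerivAt_defectDeriv_self hγ)

end

end EAR

open EAR

theorem EAR_exponent_eq {γ b x : ℝ} (hx : 0 < x) (hD : (1 + x) * √(x ^ 2 + 2 * x) - b ≠ 0) :
    (log (1 + γ) - b * √(γ ^ 2 + 2 * γ) / (1 + γ) + mu x * b) / (1 - rho x * b) =
      log (1 + γ) + b * defect γ x / ((1 + x) * √(x ^ 2 + 2 * x) - b) := by
  have hs : √(x ^ 2 + 2 * x) ^ 2 = x ^ 2 + 2 * x := sq_sqrt (by positivity)
  have : √(x ^ 2 + 2 * x) ≠ 0 := by positivity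
  have : 1 + x ≠ 0 := by positivity
  have : 1 - rho x * b = ((1 + x) * √(x ^ 2 + 2 * x) - b) / ((1 + x) * √(x ^ 2 + 2 * x)) := by
    simp only [rho]
    field_simp
  rw [this]
  simp only [mu, defect]
  set s := √(γ ^ 2 + 2 * γ)
  set t := √(x ^ 2 + 2 * x)
  have : t * (1 + x) - b ≠ 0 := by rwa [mul_comm]
  field_simp
  linear_combination b * hs

theorem EAR_sub_eq {γ b x : ℝ} (hγ : 0 < 1 + γ) (hx : 0 < x)
    (hD : (1 + x) * √(x ^ 2 + 2 * x) - b ≠ 0) :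
    EAR γ b x - γ = (1 + γ) * (exp (b * defect γ x / ((1 + x) * √(x ^ 2 + 2 * x) - b)) - 1) := by
  rw [EAR, EAR_exponent_eq hx hD, exp_add, exp_log hγ]
  ring

theorem tendsto_EAR_sub_div_sq {γ b : ℝ} (hγ : 0 < γ) (hb : b < (1 + γ) * √(γ ^ 2 + 2 * γ)) :
    Tendsto (fun x => (EAR γ b x - γ) / (x - γ) ^ 2) (𝓝[≠] γ)
      (𝓝 ((1 + γ) * (b / ((1 + γ) * √(γ ^ 2 + 2 * γ) - b)) *
        ((2 * γ ^ 2 + 4 * γ + 1) / ((1 + γ) ^ 2 * (γ ^ 2 + 2 * γ)) / 2))) := by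
  set D := fun x : ℝ => (1 + x) * √(x ^ 2 + 2 * x) - b
  set u := fun x => b * defect γ x / D x
  have hDγ : 0 < D γ := sub_pos.2 hb
  have hD : ContinuousAt D γ := by fun_prop
  have hu : Tendsto u (𝓝 γ) (𝓝 0) := by
    have : ContinuousAt u γ :=
      (continuousAt_const.mul (hasDerivAt_defect hγ).continuousAt).div hD hDγ.ne'
    simpa [u, defect_self hγ] using this.tendsto
  -- `exp u - 1 = u * dslope exp 0 u`, and `dslope exp 0` is continuous at `0` with value `1`
  have hexp : Tendsto (fun x => dslope exp 0 (u x)) (𝓝 γ) (𝓝 1) := by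
    have := (continuousAt_dslope_same.2 (differentiableAt_exp (x := 0))).tendsto.comp hu
    rwa [dslope_same, Real.deriv_exp, exp_zero] at this
  have hbD : Tendsto (fun x => b / D x) (𝓝 γ) (𝓝 (b / D γ)) :=
    (continuousAt_const.div hD hDγ.ne').tendsto
  have hlim := ((tendsto_const_nhds (x := 1 + γ)).mul
    ((hexp.mul hbD).mono_left nhdsWithin_le_nhds)).mul (tendsto_defect_div_sq hγ)
  rw [one_mul] at hlim
  refine hlim.congr' ?_
  filter_upwards [nhdsWithin_le_nhds (eventually_gt_nhds hγ),
    nhdsWithin_le_nhds (hD.eventually (eventually_gt_nhds hDγ))] with x hx hDx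
  have hexp_sub := sub_smul_dslope exp 0 (u x)
  rw [sub_zero, smul_eq_mul, exp_zero] at hexp_sub
  rw [EAR_sub_eq (by positivity) hx hDx.ne']
  simp only [u, D] at hexp_sub ⊢
  rw [← hexp_sub]
  ring

theorem stmt_2_general (γ b : ℝ) (hγ : 0 < γ) (hpos : 0 < 1 - rho γ * b) :
    Tendsto (fun x => (EAR γ b x - γ) / (x - γ) ^ 2)
      (𝓝[{x : ℝ | x ≠ γ ∧ 0 < x}] γ) (𝓝 (g1 γ b)) := by
  have hP : 0 < (1 + γ) * √(γ ^ 2 + 2 * γ) := by positivity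
  have hb : b < (1 + γ) * √(γ ^ 2 + 2 * γ) := by
    rwa [rho, one_div, inv_mul_eq_div, sub_pos, div_lt_one hP] at hpos
  have hg1 : g1 γ b = (1 + γ) * (b / ((1 + γ) * √(γ ^ 2 + 2 * γ) - b)) *
      ((2 * γ ^ 2 + 4 * γ + 1) / ((1 + γ) ^ 2 * (γ ^ 2 + 2 * γ)) / 2) := by
    have : (1 + γ) * √(γ ^ 2 + 2 * γ) - b ≠ 0 := (sub_pos.2 hb).ne'
    have : √(γ ^ 2 + 2 * γ) ≠ 0 := by positivity
    rw [g1]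
    field_simp
  rw [hg1]
  exact (tendsto_EAR_sub_div_sq hγ hb).mono_left (nhdsWithin_mono γ fun x hx => hx.1)

/-- Quadratic convergence of the EAR recursion at its fixed point γ:
(T(x) − γ)/(x − γ)² → g₁(γ,b) as x → γ with x ≠ γ, x > 0. -/
theorem stmt_2 (γ b : ℝ) (hγ : 0 < γ) (hb : 0 < b) (hpos : 0 < 1 - rho γ * b) :
    Tendsto (fun x => (EAR γ b x - γ) / (x - γ) ^ 2)
      (𝓝[{x : ℝ | x ≠ γ ∧ 0 < x}] γ) (𝓝 (g1 γ b)) :=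
  stmt_2_general γ b hγ hpos
end

section
/- Let γ ≥ 1/4 and b > 0 satisfy the feasibility condition b·√(γ²+2γ)/(1+γ) ≤ ln(1+γ). Then 1 − ρ(γ)·b > 0 and the quadratic convergence factor satisfies g1(γ,b) ≤ 1. -/
open Real

lemma hasDerivAt_pade_sub_log {z : ℝ} (hz : 0 ≤ z) :
    HasDerivAt (fun z ↦ z * (z + 6) / (4 * z + 6) - log (1 + z))
      (4 * z ^ 3 / ((4 * z + 6) ^ 2 * (1 + z))) z := by
  have h₁ : 4 * z + 6 ≠ 0 := by positivity
  have h₂ : 1 + z ≠ 0 := by positivity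
  have hpade : HasDerivAt (fun z ↦ z * (z + 6) / (4 * z + 6))
      (((1 * (z + 6) + z * 1) * (4 * z + 6) - z * (z + 6) * (4 * 1)) / (4 * z + 6) ^ 2) z :=
    ((hasDerivAt_id z).mul ((hasDerivAt_id z).add_const 6)).div
      (((hasDerivAt_id z).const_mul 4).add_const 6) h₁
  have hlog : HasDerivAt (fun z ↦ log (1 + z)) (1 / (1 + z)) z :=
    ((hasDerivAt_id z).const_add 1).log h₂
  refine (hpade.sub hlog).congr_deriv ?_
  field_simp
  ring

lemma log_one_add_le_pade {x : ℝ} (hx : 0 ≤ x) : log (1 + x) ≤ x * (x + 6) / (4 * x + 6) := by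
  have hmono : MonotoneOn (fun z ↦ z * (z + 6) / (4 * z + 6) - log (1 + z)) (Set.Ici 0) := by
    refine monotoneOn_of_hasDerivWithinAt_nonneg (convex_Ici 0)
      (fun z hz ↦ (hasDerivAt_pade_sub_log hz).continuousAt.continuousWithinAt)
      (fun z hz ↦ (hasDerivAt_pade_sub_log (interior_subset hz)).hasDerivWithinAt)
      (fun z hz ↦ ?_)
    have : 0 ≤ z := interior_subset hz
    positivity
  simpa using hmono Set.self_mem_Ici hx hx

lemma mul_log_one_add_le {γ : ℝ} (hγ : 1 / 4 ≤ γ) :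
    (2 * γ ^ 2 + 4 * γ + 1 + 2 * (1 + γ) * (γ ^ 2 + 2 * γ)) * log (1 + γ)
      ≤ 2 * (1 + γ) * (γ ^ 2 + 2 * γ) ^ 2 := by
  have hγ₀ : 0 < γ := by linarith
  -- After the Padé bound the gap is `γ (8γ⁵ + 50γ⁴ + 104γ³ + 72γ² - γ - 6) / (4γ + 6)`;
  -- bounding each `γᵏ` below by `γ / 4ᵏ⁻¹` leaves `24.3 γ - 6 > 0`.
  have hpoly : 0 < 8 * γ ^ 5 + 50 * γ ^ 4 + 104 * γ ^ 3 + 72 * γ ^ 2 - γ - 6 := by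
    have h2 : γ / 4 ≤ γ ^ 2 := by nlinarith
    have h3 : γ / 16 ≤ γ ^ 3 := by nlinarith
    have h4 : γ / 64 ≤ γ ^ 4 := by nlinarith
    have h5 : γ / 256 ≤ γ ^ 5 := by nlinarith
    linarith
  calc _ ≤ (2 * γ ^ 2 + 4 * γ + 1 + 2 * (1 + γ) * (γ ^ 2 + 2 * γ)) *
        (γ * (γ + 6) / (4 * γ + 6)) := by gcongr; exact log_one_add_le_pade hγ₀.le
    _ ≤ 2 * (1 + γ) * (γ ^ 2 + 2 * γ) ^ 2 := by
      rw [mul_div_assoc', div_le_iff₀ (by positivity)]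
      nlinarith [mul_pos hγ₀ hpoly]

section

variable {γ b : ℝ}

lemma rho_mul (γ b : ℝ) : rho γ * b = b / ((1 + γ) * √(γ ^ 2 + 2 * γ)) :=
  one_div_mul_eq_div _ _

lemma lt_mul_sqrt_of_mul_sqrt_le_log (hγ : 0 < γ)
    (h : b * √(γ ^ 2 + 2 * γ) ≤ (1 + γ) * log (1 + γ)) : b < (1 + γ) * √(γ ^ 2 + 2 * γ) := by
  set s := √(γ ^ 2 + 2 * γ)
  have hs : 0 < s := by positivity
  have hs2 : s ^ 2 = γ ^ 2 + 2 * γ := sq_sqrt (by positivity)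
  have hlog : log (1 + γ) ≤ γ := by linarith [log_le_sub_one_of_pos (by linarith : 0 < 1 + γ)]
  refine lt_of_mul_lt_mul_right ?_ hs.le
  calc b * s ≤ (1 + γ) * log (1 + γ) := h
    _ ≤ (1 + γ) * γ := by gcongr
    _ < (1 + γ) * s * s := by nlinarith

lemma one_sub_rho_mul_pos (hγ : 0 < γ)
    (h : b * √(γ ^ 2 + 2 * γ) ≤ (1 + γ) * log (1 + γ)) : 0 < 1 - rho γ * b := by
  rw [rho_mul, sub_pos, div_lt_one (by positivity)]
  exact lt_mul_sqrt_of_mul_sqrt_le_log hγ h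

lemma g1_le_one_of_mul_le (hγ : 0 < γ) (hρ : 0 < 1 - rho γ * b)
    (h : (2 * γ ^ 2 + 4 * γ + 1 + 2 * (1 + γ) * (γ ^ 2 + 2 * γ)) * b
      ≤ 2 * (1 + γ) ^ 2 * (γ ^ 2 + 2 * γ) * √(γ ^ 2 + 2 * γ)) : g1 γ b ≤ 1 := by
  have hρb : rho γ * b * ((1 + γ) * √(γ ^ 2 + 2 * γ)) = b := by
    rw [rho_mul, div_mul_cancel₀ _ (by positivity)]
  rw [g1, ← rho_mul, div_le_one (by positivity)]
  linear_combination h + 2 * (1 + γ) * (γ ^ 2 + 2 * γ) * hρb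

lemma mul_le_mul_sqrt_of_mul_sqrt_le_log (hγ : 1 / 4 ≤ γ)
    (h : b * √(γ ^ 2 + 2 * γ) ≤ (1 + γ) * log (1 + γ)) :
    (2 * γ ^ 2 + 4 * γ + 1 + 2 * (1 + γ) * (γ ^ 2 + 2 * γ)) * b
      ≤ 2 * (1 + γ) ^ 2 * (γ ^ 2 + 2 * γ) * √(γ ^ 2 + 2 * γ) := by
  set s := √(γ ^ 2 + 2 * γ)
  have hs : 0 < s := by positivity
  have hs2 : s ^ 2 = γ ^ 2 + 2 * γ := sq_sqrt (by positivity)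
  refine le_of_mul_le_mul_right ?_ hs
  calc _ = (2 * γ ^ 2 + 4 * γ + 1 + 2 * (1 + γ) * (γ ^ 2 + 2 * γ)) * (b * s) := by ring
    _ ≤ (2 * γ ^ 2 + 4 * γ + 1 + 2 * (1 + γ) * (γ ^ 2 + 2 * γ)) * ((1 + γ) * log (1 + γ)) := by
      gcongr
    _ ≤ (1 + γ) * (2 * (1 + γ) * (γ ^ 2 + 2 * γ) ^ 2) := by
      rw [mul_left_comm]
      exact mul_le_mul_of_nonneg_left (mul_log_one_add_le hγ) (by positivity)
    _ = _ := by rw [← hs2]; ring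

end

theorem stmt_3_general (γ b : ℝ) (hγ : 1 / 4 ≤ γ)
    (hfeas : b * Real.sqrt (γ ^ 2 + 2 * γ) / (1 + γ) ≤ Real.log (1 + γ)) :
    0 < 1 - rho γ * b ∧ g1 γ b ≤ 1 := by
  have hγ₀ : 0 < γ := by linarith
  have hfeas' : b * √(γ ^ 2 + 2 * γ) ≤ (1 + γ) * log (1 + γ) := by
    rwa [div_le_iff₀ (by linarith), mul_comm (log _)] at hfeas
  have hρ := one_sub_rho_mul_pos hγ₀ hfeas'
  exact ⟨hρ, g1_le_one_of_mul_le hγ₀ hρ (mul_le_mul_sqrt_of_mul_sqrt_le_log hγ hfeas')⟩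

/-- For γ ≥ 1/4 and feasible b, we have 1 − ρ(γ)·b > 0 and g₁(γ,b) ≤ 1. -/
theorem stmt_3 (γ b : ℝ) (hγ : 1 / 4 ≤ γ) (hb : 0 < b)
    (hfeas : b * Real.sqrt (γ ^ 2 + 2 * γ) / (1 + γ) ≤ Real.log (1 + γ)) :
    0 < 1 - rho γ * b ∧ g1 γ b ≤ 1 :=
  stmt_3_general γ b hγ hfeas
end

section
/- Let γ > 0, q > 0, m > 0 and N ≥ 0. If q² ≥ g3(γ) and q·√(γ²+2γ) ≤ √m·(1+γ)·ln(1+γ), then q·√m·(μ(γ) + (N·ln2/m)·ρ(γ)) ≥ ρ(γ)² (this is the Hessian-determinant lower bound used to prove joint convexity of the EAR function). -/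
/-- g₃(γ) = ln(1+γ)/((γ²+2γ)·((γ²+2γ) − ln(1+γ))). -/
noncomputable def g3 (γ : ℝ) : ℝ :=
  Real.log (1 + γ) / ((γ ^ 2 + 2 * γ) * ((γ ^ 2 + 2 * γ) - Real.log (1 + γ)))

/-- The Hessian-determinant lower bound used to prove joint convexity of
the EAR function. -/
theorem stmt_15 (γ q m N : ℝ) (hγ : 0 < γ) (hq : 0 < q) (hm : 0 < m) (hN : 0 ≤ N)
    (hq2 : g3 γ ≤ q ^ 2)
    (hqm : q * Real.sqrt (γ ^ 2 + 2 * γ) ≤ Real.sqrt m * (1 + γ) * Real.log (1 + γ)) :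
    rho γ ^ 2 ≤ q * Real.sqrt m * (mu γ + (N * Real.log 2 / m) * rho γ) := by
  have hx : (0:ℝ) < γ ^ 2 + 2 * γ := by nlinarith
  set s := Real.sqrt (γ ^ 2 + 2 * γ) with hs
  have hspos : 0 < s := Real.sqrt_pos.2 hx
  have hsq : s ^ 2 = γ ^ 2 + 2 * γ := Real.sq_sqrt hx.le
  set L := Real.log (1 + γ) with hL
  have h1γ : (0:ℝ) < 1 + γ := by linarith
  have hLpos : 0 < L := Real.log_pos (by linarith)
  have hLlt : L < s ^ 2 := by
    have : L ≤ (1 + γ) - 1 := Real.log_le_sub_one_of_pos h1γ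
    nlinarith
  have hmpos : 0 < Real.sqrt m := Real.sqrt_pos.2 hm
  have hrho : rho γ = 1 / ((1 + γ) * s) := rfl
  have hmu : mu γ = (s ^ 2 - L) / ((1 + γ) * s) := by
    rw [mu, ← hs, ← hL]
    field_simp
  -- from hq2
  have hB : L ≤ q ^ 2 * ((γ ^ 2 + 2 * γ) * ((γ ^ 2 + 2 * γ) - L)) := by
    have hden : 0 < (γ ^ 2 + 2 * γ) * ((γ ^ 2 + 2 * γ) - L) := by nlinarith
    have := hq2
    rw [g3, ← hL, div_le_iff₀ hden] at this
    linarith [this]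
  have key : 1 ≤ q * Real.sqrt m * (1 + γ) * (s ^ 2 - L) * s := by
    have h1 : 0 ≤ q * s * (s ^ 2 - L) :=
      mul_nonneg (mul_nonneg hq.le hspos.le) (by linarith)
    have h2 := mul_le_mul_of_nonneg_left hqm h1
    have hB' : L ≤ q * s * (s ^ 2 - L) * (q * s) := by
      have e : q * s * (s ^ 2 - L) * (q * s) = q ^ 2 * (s ^ 2 * (s ^ 2 - L)) := by ring
      rw [e, hsq]; exact hB
    have e2 : L * (q * Real.sqrt m * (1 + γ) * (s ^ 2 - L) * s)
        = q * s * (s ^ 2 - L) * (Real.sqrt m * (1 + γ) * L) := by ring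
    have h3 : L * 1 ≤ L * (q * Real.sqrt m * (1 + γ) * (s ^ 2 - L) * s) := by
      rw [mul_one, e2]; linarith
    have := le_of_mul_le_mul_left h3 hLpos
    linarith
  have hmain : rho γ ^ 2 ≤ q * Real.sqrt m * mu γ := by
    rw [hrho, hmu, div_pow, one_pow, div_le_iff₀ (by positivity)]
    have h4 : q * Real.sqrt m * ((s ^ 2 - L) / ((1 + γ) * s)) * ((1 + γ) * s) ^ 2
        = q * Real.sqrt m * (1 + γ) * (s ^ 2 - L) * s := by
      field_simp
    rw [h4]
    exact key
  have hterm : 0 ≤ q * Real.sqrt m * ((N * Real.log 2 / m) * rho γ) := by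
    have hl2 : 0 ≤ Real.log 2 := Real.log_nonneg (by norm_num)
    rw [hrho]
    positivity
  rw [mul_add]
  linarith
end

section
/- The function x ↦ √(x²+2x) / ((1+x)·ln(1+x)) is strictly decreasing on (0, ∞). -/
/-!
With `s = √(x² + 2x)` and `L = log (1 + x)`, the identity `(1 + x)² = s² + 1` collapses the
numerator of the quotient rule to `(L - s²) / s`, so the derivative has the sign of
`log (1 + x) - (x² + 2x)`, which is negative because `log (1 + x) < x`.
-/

open Real Set

noncomputable def sqrtRatio (x : ℝ) : ℝ := √(x ^ 2 + 2 * x) / ((1 + x) * log (1 + x))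

theorem hasDerivAt_sqrtRatio {x : ℝ} (hx : 0 < x) :
    HasDerivAt sqrtRatio
      ((log (1 + x) - (x ^ 2 + 2 * x)) / (√(x ^ 2 + 2 * x) * ((1 + x) * log (1 + x)) ^ 2)) x := by
  have hq : 0 < x ^ 2 + 2 * x := by positivity
  have hL : 0 < log (1 + x) := log_pos (by linarith)
  have hpoly : HasDerivAt (fun x : ℝ => x ^ 2 + 2 * x) (2 * x + 2) x :=
    ((hasDerivAt_pow 2 x).add ((hasDerivAt_id' x).const_mul 2)).congr_deriv (by ring)
  have hs : HasDerivAt (fun x : ℝ => √(x ^ 2 + 2 * x)) ((2 * x + 2) / (2 * √(x ^ 2 + 2 * x))) x :=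
    (hpoly.sqrt hq.ne').congr_deriv (by ring)
  have hlog : HasDerivAt (fun x : ℝ => log (1 + x)) (1 / (1 + x)) x :=
    ((hasDerivAt_id' x).const_add 1).log (by positivity) |>.congr_deriv (by simp)
  have hden : HasDerivAt (fun x : ℝ => (1 + x) * log (1 + x)) (log (1 + x) + 1) x :=
    (((hasDerivAt_id' x).const_add 1).mul hlog).congr_deriv (by field_simp)
  refine (hs.div hden (by positivity)).congr_deriv ?_
  have hsq : √(x ^ 2 + 2 * x) ^ 2 = x ^ 2 + 2 * x := sq_sqrt hq.le
  have hs0 : √(x ^ 2 + 2 * x) ≠ 0 := (sqrt_pos.2 hq).ne'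
  set s := √(x ^ 2 + 2 * x)
  field_simp
  linear_combination (-(log (1 + x) + 1)) * hsq

theorem deriv_sqrtRatio_neg {x : ℝ} (hx : 0 < x) : deriv sqrtRatio x < 0 := by
  rw [(hasDerivAt_sqrtRatio hx).deriv]
  have hlog : log (1 + x) < x := by
    linarith [log_lt_sub_one_of_pos (by linarith : 0 < 1 + x) (by linarith : 1 + x ≠ 1)]
  have hL : 0 < log (1 + x) := log_pos (by linarith)
  have hs : 0 < √(x ^ 2 + 2 * x) := sqrt_pos.2 (by positivity)
  exact div_neg_of_neg_of_pos (by linarith [sq_nonneg x]) (by positivity)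

/-- x ↦ √(x²+2x)/((1+x)·ln(1+x)) is strictly decreasing on (0, ∞). -/
theorem stmt_18 :
    StrictAntiOn (fun x : ℝ => Real.sqrt (x ^ 2 + 2 * x) / ((1 + x) * Real.log (1 + x)))
      (Set.Ioi (0 : ℝ)) := by
  have hcont : ContinuousOn sqrtRatio (Ioi 0) := fun x hx =>
    (hasDerivAt_sqrtRatio hx).continuousAt.continuousWithinAt
  exact strictAntiOn_of_deriv_neg (convex_Ioi 0) hcont
    fun x hx => deriv_sqrtRatio_neg (interior_subset hx)
end
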